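/- arXiv:0811.1649 — 2 statements merged into one kernel-verified Lean document; each statement's English description precedes it below -/
import Mathlib

section
/- For every n ≥ 1 and every ε ∈ [0,1/4], the local part of the system P^{n,ε} of n isotropic ε-PRBs is at most 2^{2n} · Σ_{i=⌈n/2⌉}^{n} C(n,i)·(1−ε)^{n−i}·ε^{i}, where C(n,i) denotes the binomial coefficient. -/
open Finset

/-- n-bit strings. -/
abbrev Bits (n : ℕ) := Fin n → Bool

/-- A bipartite conditional "box" on n-bit alphabets: `P x y u v` is the
probability of outputs `(x, y)` given inputs `(u, v)`. -/
abbrev Box (n : ℕ) := Bits n → Bits n → Bits n → Bits n → ℝ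

/-- `P` is a bipartite conditional probability distribution. -/
def IsBox {n : ℕ} (P : Box n) : Prop :=
  (∀ x y u v, 0 ≤ P x y u v) ∧
  (∀ u v, ∑ x : Bits n, ∑ y : Bits n, P x y u v = 1)

/-- `P` is non-signalling. -/
def NonSignalling {n : ℕ} (P : Box n) : Prop :=
  (∀ y v u u', ∑ x : Bits n, P x y u v = ∑ x : Bits n, P x y u' v) ∧
  (∀ x u v v', ∑ y : Bits n, P x y u v = ∑ y : Bits n, P x y u v')

/-- The local deterministic box given by response functions `f` (Alice) and `g` (Bob). -/
def detBox {n : ℕ} (f g : Bits n → Bits n) : Box n :=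
  fun x y u v => if x = f u ∧ y = g v then 1 else 0

/-- `P` is local deterministic. -/
def IsLocalDet {n : ℕ} (P : Box n) : Prop :=
  ∃ f g : Bits n → Bits n, P = detBox f g

/-- `P` is local: a convex combination of local deterministic boxes. -/
def IsLocal {n : ℕ} (P : Box n) : Prop :=
  ∃ w : (Bits n → Bits n) × (Bits n → Bits n) → ℝ,
    (∀ fg, 0 ≤ w fg) ∧ (∑ fg, w fg = 1) ∧
    (∀ x y u v, P x y u v =
      ∑ fg : (Bits n → Bits n) × (Bits n → Bits n), w fg * detBox fg.1 fg.2 x y u v)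

/-- The local part of `P`: the maximal weight `p` such that `P` is a convex
combination of a local box (weight `p`) and a non-signalling box (weight `1 - p`). -/
noncomputable def localPart {n : ℕ} (P : Box n) : ℝ :=
  sSup {p : ℝ | 0 ≤ p ∧ p ≤ 1 ∧
    ∃ PL PNS : Box n, IsBox PL ∧ IsLocal PL ∧ IsBox PNS ∧ NonSignalling PNS ∧
      ∀ x y u v, P x y u v = p * PL x y u v + (1 - p) * PNS x y u v}

/-- Single-copy isotropic ε-PRB entries. -/
noncomputable def isoPRB1 (ε : ℝ) (x y u v : Bool) : ℝ :=
  if xor x y = (u && v) then (1 - ε) / 2 else ε / 2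

/-- The system of n independent isotropic ε-PRBs. -/
noncomputable def isoPRB (n : ℕ) (ε : ℝ) : Box n :=
  fun x y u v => ∏ i : Fin n, isoPRB1 ε (x i) (y i) (u i) (v i)

/-- Single-copy maximally biased δ-PRB entries. -/
noncomputable def biasedPRB1 (δ : ℝ) (x y u v : Bool) : ℝ :=
  if u && v then
    match x, y with
    | false, false => 0
    | true,  false => 1 / 2 - δ / 2
    | false, true  => 1 / 2 + δ / 2
    | true,  true  => 0
  else
    match x, y with
    | false, false => 1 / 2 - δ / 2
    | true,  false => 0
    | false, true  => δ
    | true,  true  => 1 / 2 - δ / 2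

/-- The system of n independent maximally biased δ-PRBs. -/
noncomputable def biasedPRB (n : ℕ) (δ : ℝ) : Box n :=
  fun x y u v => ∏ i : Fin n, biasedPRB1 δ (x i) (y i) (u i) (v i)

/-! A deterministic strategy answering all `n` CHSH games must lose at least half of them on some
input pair: choose Alice's input `u` so that Bob's two possible inputs lose on complementary sets
of coordinates. Hence the "at least `⌈n/2⌉` losses" event, summed over all `2^(2n)` input pairs,
has weight at least `1` under every local box. In a decomposition `P = p P_L + (1 - p) P_NS` the
non-signalling part only adds weight, so `p` is at most the weight of this event under `P^{n,ε}`,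
which is `2^(2n)` times a binomial tail. -/

section BoxMass

variable {n : ℕ} (S : Bits n → Bits n → Bits n → Bits n → Prop) [∀ x y u v, Decidable (S x y u v)]

def boxMass (P : Box n) : ℝ :=
  ∑ u, ∑ v, ∑ x, ∑ y, if S x y u v then P x y u v else 0

variable {S}

lemma boxMass_mono {P Q : Box n} (h : ∀ x y u v, P x y u v ≤ Q x y u v) :
    boxMass S P ≤ boxMass S Q := by
  unfold boxMass
  gcongr with u _ v _ x _ y _
  split_ifs
  exacts [h x y u v, le_rfl]

lemma boxMass_nonneg {P : Box n} (hP : ∀ x y u v, 0 ≤ P x y u v) : 0 ≤ boxMass S P := by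
  simpa [boxMass] using boxMass_mono (S := S) (P := 0) hP

lemma le_boxMass {P : Box n} (hP : ∀ x y u v, 0 ≤ P x y u v) {x y u v : Bits n}
    (h : S x y u v) : P x y u v ≤ boxMass S P := by
  have hF : ∀ x y u v, 0 ≤ if S x y u v then P x y u v else 0 := fun x y u v => by
    split_ifs
    exacts [hP x y u v, le_rfl]
  calc P x y u v = if S x y u v then P x y u v else 0 := (if_pos h).symm
    _ ≤ ∑ y, _ := single_le_sum (fun y _ => hF x y u v) (mem_univ y)
    _ ≤ ∑ x, ∑ y, _ := single_le_sum (fun x _ => sum_nonneg fun y _ => hF x y u v) (mem_univ x)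
    _ ≤ ∑ v, ∑ x, ∑ y, _ :=
      single_le_sum (fun v _ => sum_nonneg fun x _ => sum_nonneg fun y _ => hF x y u v)
        (mem_univ v)
    _ ≤ boxMass S P :=
      single_le_sum (fun u _ => sum_nonneg fun v _ => sum_nonneg fun x _ =>
        sum_nonneg fun y _ => hF x y u v) (mem_univ u)

lemma boxMass_const_mul (c : ℝ) (P : Box n) :
    boxMass S (fun x y u v => c * P x y u v) = c * boxMass S P := by
  simp only [boxMass, mul_sum, mul_ite, mul_zero]

lemma boxMass_sum {ι : Type*} (s : Finset ι) (B : ι → Box n) :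
    boxMass S (fun x y u v => ∑ i ∈ s, B i x y u v) = ∑ i ∈ s, boxMass S (B i) := by
  symm
  unfold boxMass
  rw [sum_comm]; refine sum_congr rfl fun u _ => ?_
  rw [sum_comm]; refine sum_congr rfl fun v _ => ?_
  rw [sum_comm]; refine sum_congr rfl fun x _ => ?_
  rw [sum_comm]; refine sum_congr rfl fun y _ => ?_
  simp only [sum_ite_irrel, sum_const_zero]

lemma detBox_nonneg (f g : Bits n → Bits n) (x y u v : Bits n) : 0 ≤ detBox f g x y u v := by
  unfold detBox
  split_ifs <;> norm_num

lemma one_le_boxMass_of_isLocal (hS : ∀ f g : Bits n → Bits n, ∃ u v, S (f u) (g v) u v)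
    {P : Box n} (hP : IsLocal P) : 1 ≤ boxMass S P := by
  obtain ⟨w, hw0, hw1, hPw⟩ := hP
  have hdet (f g : Bits n → Bits n) : 1 ≤ boxMass S (detBox f g) := by
    obtain ⟨u, v, h⟩ := hS f g
    simpa [detBox] using le_boxMass (detBox_nonneg f g) h
  obtain rfl : P = fun x y u v => ∑ fg, w fg * detBox fg.1 fg.2 x y u v := by
    funext x y u v
    exact hPw x y u v
  calc 1 = ∑ fg, w fg := hw1.symm
    _ ≤ ∑ fg, w fg * boxMass S (detBox fg.1 fg.2) :=
      sum_le_sum fun fg _ => le_mul_of_one_le_right (hw0 fg) (hdet fg.1 fg.2)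
    _ = _ := by simp only [boxMass_sum, boxMass_const_mul]

theorem localPart_le_boxMass (hS : ∀ f g : Bits n → Bits n, ∃ u v, S (f u) (g v) u v)
    {P : Box n} (hP : 0 ≤ boxMass S P) : localPart P ≤ boxMass S P := by
  refine Real.sSup_le ?_ hP
  rintro p ⟨hp0, hp1, PL, PNS, -, hPL, hPNS, -, hdecomp⟩
  calc p ≤ p * boxMass S PL := le_mul_of_one_le_right hp0 (one_le_boxMass_of_isLocal hS hPL)
    _ = boxMass S (fun x y u v => p * PL x y u v) := (boxMass_const_mul p PL).symm
    _ ≤ boxMass S P := boxMass_mono fun x y u v => by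
      rw [hdecomp x y u v]
      have := mul_nonneg (sub_nonneg.2 hp1) (hPNS.1 x y u v)
      linarith

end BoxMass

section CHSH

variable {n : ℕ}

def lossSet (x y u v : Bits n) : Finset (Fin n) :=
  {i | xor (x i) (y i) ≠ (u i && v i)}

lemma exists_half_le_card_lossSet (f g : Bits n → Bits n) :
    ∃ u v, (n + 1) / 2 ≤ #(lossSet (f u) (g v) u v) := by
  let v₀ : Bits n := fun _ => false
  let v₁ : Bits n := fun _ => true
  -- `u i = true` exactly where Bob's answers to `v₀` and `v₁` agree; then in every coordinate
  -- exactly one of the two games is lost.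
  let u : Bits n := fun i => !(xor (g v₀ i) (g v₁ i))
  have hcompl : lossSet (f u) (g v₁) u v₁ = (lossSet (f u) (g v₀) u v₀)ᶜ := by
    ext i
    simp only [lossSet, mem_compl, mem_filter, mem_univ, true_and, u, v₀, v₁]
    generalize f u i = a, g v₀ i = b₀, g v₁ i = b₁
    decide +revert
  have hcard : #(lossSet (f u) (g v₁) u v₁) = n - #(lossSet (f u) (g v₀) u v₀) := by
    rw [hcompl, card_compl, Fintype.card_fin]
  have hle : #(lossSet (f u) (g v₀) u v₀) ≤ n := card_le_univ _ |>.trans_eq (Fintype.card_fin n)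
  by_cases h : (n + 1) / 2 ≤ #(lossSet (f u) (g v₀) u v₀)
  · exact ⟨u, v₀, h⟩
  · exact ⟨u, v₁, by omega⟩

lemma isoPRB_nonneg {ε : ℝ} (hε0 : 0 ≤ ε) (hε1 : ε ≤ 1) (x y u v : Bits n) :
    0 ≤ isoPRB n ε x y u v :=
  prod_nonneg fun i _ => by
    unfold isoPRB1
    split_ifs <;> linarith

lemma isoPRB_eq (ε : ℝ) (x y u v : Bits n) :
    isoPRB n ε x y u v =
      (1 - ε) ^ (n - #(lossSet x y u v)) * ε ^ #(lossSet x y u v) / 2 ^ n := by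
  have hfactor (a b c : Bool) :
      isoPRB1 ε a b c = fun d => (if xor a b ≠ (c && d) then ε else 1 - ε) / 2 := by
    funext d
    unfold isoPRB1
    split_ifs <;> simp_all
  simp only [isoPRB, hfactor]
  have hwon : #{i | ¬xor (x i) (y i) ≠ (u i && v i)} = n - #(lossSet x y u v) := by
    have := card_filter_add_card_filter_not (s := univ) fun i => xor (x i) (y i) ≠ (u i && v i)
    rw [card_univ, Fintype.card_fin] at this
    rw [lossSet]
    omega
  rw [prod_div_distrib, prod_const, card_univ, Fintype.card_fin, prod_ite, prod_const, prod_const,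
    hwon, mul_comm]
  rfl

lemma lossSet_bijective (x u v : Bits n) : Function.Bijective fun y => lossSet x y u v := by
  refine (Fintype.bijective_iff_injective_and_card _).2 ⟨fun y y' h => ?_, by simp⟩
  funext i
  have := congrArg (i ∈ ·) h
  simp only [lossSet, mem_filter, mem_univ, true_and, eq_iff_iff] at this
  revert this
  generalize x i = a, y i = b, y' i = b', (u i && v i) = c
  decide +revert

lemma sum_isoPRB_of_le_card_lossSet (m : ℕ) (ε : ℝ) (x u v : Bits n) :
    ∑ y, (if m ≤ #(lossSet x y u v) then isoPRB n ε x y u v else 0) =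
      (∑ i ∈ Icc m n, (n.choose i : ℝ) * (1 - ε) ^ (n - i) * ε ^ i) / 2 ^ n := by
  let F : ℕ → ℝ := fun k => if m ≤ k then (1 - ε) ^ (n - k) * ε ^ k / 2 ^ n else 0
  calc ∑ y, (if m ≤ #(lossSet x y u v) then isoPRB n ε x y u v else 0)
      = ∑ y, F #(lossSet x y u v) := by simp only [F, isoPRB_eq]
    _ = ∑ A : Finset (Fin n), F #A :=
      Fintype.sum_bijective _ (lossSet_bijective x u v) _ _ fun _ => rfl
    _ = ∑ k ∈ range (n + 1), n.choose k * F k := by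
      rw [← powerset_univ, sum_powerset_apply_card]
      simp [nsmul_eq_mul]
    _ = _ := by
      have hIcc : {k ∈ range (n + 1) | m ≤ k} = Icc m n := by
        ext k
        simp only [mem_filter, mem_range, mem_Icc]
        omega
      simp only [F, mul_ite, mul_zero, ← sum_filter, hIcc, sum_div, mul_div_assoc, mul_assoc]

lemma boxMass_isoPRB (m : ℕ) (ε : ℝ) :
    boxMass (fun x y u v => m ≤ #(lossSet x y u v)) (isoPRB n ε) =
      2 ^ (2 * n) * ∑ i ∈ Icc m n, (n.choose i : ℝ) * (1 - ε) ^ (n - i) * ε ^ i := by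
  simp only [boxMass, sum_isoPRB_of_le_card_lossSet, sum_const, card_univ, Fintype.card_fun,
    Fintype.card_bool, Fintype.card_fin, nsmul_eq_mul]
  push_cast
  field_simp
  ring

end CHSH

theorem stmt13_general (n : ℕ) (ε : ℝ) (hε0 : 0 ≤ ε) (hε : ε ≤ 1 / 4) :
    localPart (isoPRB n ε) ≤
      2 ^ (2 * n) * ∑ i ∈ Finset.Icc ((n + 1) / 2) n,
        (n.choose i : ℝ) * (1 - ε) ^ (n - i) * ε ^ i := by
  rw [← boxMass_isoPRB]
  exact localPart_le_boxMass exists_half_le_card_lossSet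
    (boxMass_nonneg (isoPRB_nonneg hε0 (by linarith)))

/-- upper bound on the local part of n isotropic ε-PRBs. -/
theorem stmt13 (n : ℕ) (hn : 1 ≤ n) (ε : ℝ) (hε0 : 0 ≤ ε) (hε : ε ≤ 1 / 4) :
    localPart (isoPRB n ε) ≤
      2 ^ (2 * n) * ∑ i ∈ Finset.Icc ((n + 1) / 2) n,
        (n.choose i : ℝ) * (1 - ε) ^ (n - i) * ε ^ i :=
  stmt13_general n ε hε0 hε
end

section
/- For every δ ∈ [0,1/3], the local part of the maximally biased δ-PRB P_b^{1,δ} equals 3δ. -/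
open Finset

lemma bits1_ext (a b : Bits 1) : a = b ↔ a 0 = b 0 :=
  ⟨fun h => by rw [h], fun h => funext fun i => by rw [Subsingleton.elim i 0]; exact h⟩
abbrev cb (b : Bool) : Bits 1 := fun _ => b
lemma sum_bits1 (F : Bits 1 → ℝ) : ∑ x : Bits 1, F x = F (cb false) + F (cb true) := by
  rw [← Equiv.sum_comp (Equiv.funUnique (Fin 1) Bool).symm F, Fintype.sum_bool]
  show F (fun _ => true) + F (fun _ => false) = _; ring
lemma biased_apply (δ : ℝ) (x y u v : Bits 1) :
    biasedPRB 1 δ x y u v = biasedPRB1 δ (x 0) (y 0) (u 0) (v 0) := by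
  simp [biasedPRB]
noncomputable def pl1 (x y u v : Bool) : ℝ :=
  cond (u && v) (cond x (cond y 0 (1/3)) (cond y (2/3) 0))
    (cond x (cond y (1/3) 0) (1/3))
noncomputable def PLbox : Box 1 := fun x y u v => pl1 (x 0) (y 0) (u 0) (v 0)
def lift1 (h : Bool → Bool) : Bits 1 → Bits 1 := fun a _ => h (a 0)
lemma det_lift (h k : Bool → Bool) (x y u v : Bits 1) :
    detBox (lift1 h) (lift1 k) x y u v = if x 0 = h (u 0) ∧ y 0 = k (v 0) then 1 else 0 := by
  simp [detBox, lift1, bits1_ext]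
lemma isBox_PL : IsBox PLbox := by
  constructor
  · intro x y u v
    simp only [PLbox]
    cases x 0 <;> cases y 0 <;> cases u 0 <;> cases v 0 <;> simp [pl1] <;> norm_num
  · intro u v
    simp only [sum_bits1, PLbox]
    cases u 0 <;> cases v 0 <;> simp [pl1] <;> norm_num

lemma isBox_PNS : IsBox (biasedPRB 1 0) := by
  constructor
  · intro x y u v
    rw [biased_apply]
    cases x 0 <;> cases y 0 <;> cases u 0 <;> cases v 0 <;> simp [biasedPRB1] <;> norm_num
  · intro u v
    simp only [sum_bits1, biased_apply]
    cases u 0 <;> cases v 0 <;> simp [biasedPRB1] <;> norm_num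

lemma ns_PNS : NonSignalling (biasedPRB 1 0) := by
  constructor
  · intro y v u u'
    simp only [sum_bits1, biased_apply]
    cases y 0 <;> cases v 0 <;> cases u 0 <;> cases u' 0 <;> simp [biasedPRB1] <;> norm_num
  · intro x u v v'
    simp only [sum_bits1, biased_apply]
    cases x 0 <;> cases u 0 <;> cases v 0 <;> cases v' 0 <;> simp [biasedPRB1] <;> norm_num

abbrev Strat := (Bits 1 → Bits 1) × (Bits 1 → Bits 1)
noncomputable def wA : Strat := (lift1 id, lift1 not)
noncomputable def wB : Strat := (lift1 (fun _ => false), lift1 id)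
noncomputable def wC : Strat := (lift1 not, lift1 (fun _ => true))

lemma isLocal_PL : IsLocal PLbox := by
  refine ⟨fun fg => 1/3 * ((if fg = wA then (1:ℝ) else 0) + (if fg = wB then 1 else 0)
    + (if fg = wC then 1 else 0)), fun fg => by positivity, ?_, ?_⟩
  · rw [← Finset.mul_sum, Finset.sum_add_distrib, Finset.sum_add_distrib]
    simp
    norm_num
  · intro x y u v
    have h1 : ∀ a : Strat, ∑ fg : Strat,
        (if fg = a then (1:ℝ) else 0) * detBox fg.1 fg.2 x y u v
        = detBox a.1 a.2 x y u v := by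
      intro a; simp [ite_mul]
    have expand : ∑ fg : Strat, (1/3 * ((if fg = wA then (1:ℝ) else 0) + (if fg = wB then 1 else 0)
        + (if fg = wC then 1 else 0))) * detBox fg.1 fg.2 x y u v
        = 1/3 * (detBox wA.1 wA.2 x y u v + detBox wB.1 wB.2 x y u v + detBox wC.1 wC.2 x y u v) := by
      rw [← h1 wA, ← h1 wB, ← h1 wC, ← Finset.sum_add_distrib, ← Finset.sum_add_distrib,
        Finset.mul_sum]
      exact Finset.sum_congr rfl fun fg _ => by ring
    rw [expand]
    show pl1 _ _ _ _ = _
    rw [show wA.1 = lift1 id from rfl, show wA.2 = lift1 not from rfl,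
      show wB.1 = lift1 (fun _ => false) from rfl, show wB.2 = lift1 id from rfl,
      show wC.1 = lift1 not from rfl, show wC.2 = lift1 (fun _ => true) from rfl,
      det_lift, det_lift, det_lift]
    cases x 0 <;> cases y 0 <;> cases u 0 <;> cases v 0 <;> norm_num [pl1]

noncomputable def chsh (Q : Box 1) : ℝ :=
  ∑ u : Bool, ∑ v : Bool, ∑ x : Bool, ∑ y : Bool,
    if xor x y = (u && v) then Q (cb x) (cb y) (cb u) (cb v) else 0

lemma chsh_eq (Q : Box 1) : chsh Q =
    Q (cb false) (cb false) (cb false) (cb false) + Q (cb true) (cb true) (cb false) (cb false)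
  + Q (cb false) (cb false) (cb false) (cb true) + Q (cb true) (cb true) (cb false) (cb true)
  + Q (cb false) (cb false) (cb true) (cb false) + Q (cb true) (cb true) (cb true) (cb false)
  + Q (cb false) (cb true) (cb true) (cb true) + Q (cb true) (cb false) (cb true) (cb true) := by
  simp [chsh, Fintype.sum_bool]; ring

lemma chsh_biased (δ : ℝ) : chsh (biasedPRB 1 δ) = 4 - 3*δ := by
  rw [chsh_eq]; simp only [biased_apply]
  norm_num [biasedPRB1, cb]
  ring

lemma chsh_det (f g : Bits 1 → Bits 1) : chsh (detBox f g) ≤ 3 := by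
  have hd : ∀ x y u v : Bool, detBox f g (cb x) (cb y) (cb u) (cb v)
      = if (x = f (cb u) 0 ∧ y = g (cb v) 0) then 1 else 0 := by
    intro x y u v; simp [detBox, bits1_ext, cb]
  simp only [chsh, Fintype.sum_bool, hd]
  cases h1 : f (cb false) 0 <;> cases h2 : f (cb true) 0 <;>
    cases h3 : g (cb false) 0 <;> cases h4 : g (cb true) 0 <;> norm_num

lemma chsh_local (PL : Box 1) (hloc : IsLocal PL) : chsh PL ≤ 3 := by
  obtain ⟨w, h0, h1, hrep⟩ := hloc
  calc chsh PL = ∑ fg : Strat, w fg * chsh (detBox fg.1 fg.2) := by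
        simp only [chsh_eq, hrep, mul_add, Finset.sum_add_distrib]
    _ ≤ ∑ fg : Strat, w fg * 3 :=
        Finset.sum_le_sum fun fg _ => mul_le_mul_of_nonneg_left (chsh_det fg.1 fg.2) (h0 fg)
    _ = 3 := by rw [← Finset.sum_mul, h1, one_mul]

lemma chsh_box (Q : Box 1) (hQ : IsBox Q) : chsh Q ≤ 4 := by
  have key : ∀ u v : Bool, (∑ x : Bool, ∑ y : Bool,
      if xor x y = (u && v) then Q (cb x) (cb y) (cb u) (cb v) else 0) ≤ 1 := by
    intro u v
    have hs := hQ.2 (cb u) (cb v)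
    simp only [sum_bits1] at hs
    have ile : ∀ (c : Prop) [Decidable c] (a : ℝ), 0 ≤ a → (if c then a else 0) ≤ a := by
      intros c _ a ha; split <;> simp [ha]
    simp only [Fintype.sum_bool]
    linarith [ile (xor false false = (u && v)) (Q (cb false) (cb false) (cb u) (cb v)) (hQ.1 _ _ _ _),
      ile (xor false true = (u && v)) (Q (cb false) (cb true) (cb u) (cb v)) (hQ.1 _ _ _ _),
      ile (xor true false = (u && v)) (Q (cb true) (cb false) (cb u) (cb v)) (hQ.1 _ _ _ _),
      ile (xor true true = (u && v)) (Q (cb true) (cb true) (cb u) (cb v)) (hQ.1 _ _ _ _), hs]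
  calc chsh Q ≤ ∑ u : Bool, ∑ v : Bool, (1:ℝ) :=
        Finset.sum_le_sum fun u _ => Finset.sum_le_sum fun v _ => key u v
    _ = 4 := by norm_num [Fintype.sum_bool]

lemma mix (δ : ℝ) : ∀ x y u v : Bits 1, biasedPRB 1 δ x y u v
    = (3*δ) * PLbox x y u v + (1 - 3*δ) * biasedPRB 1 0 x y u v := by
  intro x y u v
  simp only [biased_apply, PLbox]
  cases x 0 <;> cases y 0 <;> cases u 0 <;> cases v 0 <;> simp [biasedPRB1, pl1] <;> ring

/-- the local part of one maximally biased δ-PRB is `3δ`. -/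
theorem stmt15 (δ : ℝ) (hδ0 : 0 ≤ δ) (hδ : δ ≤ 1 / 3) :
    localPart (biasedPRB 1 δ) = 3 * δ := by
  apply IsGreatest.csSup_eq
  constructor
  · exact ⟨by linarith, by linarith, PLbox, biasedPRB 1 0, isBox_PL, isLocal_PL,
      isBox_PNS, ns_PNS, mix δ⟩
  · rintro p ⟨hp0, hp1, PL, PNS, hbL, hlocL, hbNS, hns, hP⟩
    have e1 : chsh (biasedPRB 1 δ) = p * chsh PL + (1-p) * chsh PNS := by
      rw [chsh_eq, chsh_eq, chsh_eq]; simp only [hP]; ring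
    have e2 := chsh_biased δ
    have h3 := chsh_local PL hlocL
    have h4 := chsh_box PNS hbNS
    nlinarith [mul_le_mul_of_nonneg_left h3 hp0,
      mul_le_mul_of_nonneg_left h4 (by linarith : (0:ℝ) ≤ 1-p)]
end
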